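/- With 1̃_ε the smooth sinusoidal step function, the function q : ℝ → ℝ defined by q(s) = 1̃_ε(s) + s·1̃'_ε(s) satisfies q(s) ≥ 0 for all s ≥ 0, and q(0) = 1/2. Consequently, for linearly independent u, v ∈ ℝ^m, the vector u·q(t−s) + v·q(s−t) is nonzero for all s, t ∈ ℝ. -/

import Mathlib

/-!
On `[-ε, ε]` the step is `½ sin θ + ½` with `θ ∈ [-π/2, π/2]`, so `smoothStep ε` is monotone
with `smoothStep ε 0 = ½`. A monotone function has nonnegative derivative (where it is not
differentiable, `deriv` is `0`), hence `q(s) = f s + s f'(s) ≥ f 0 = ½` for `s ≥ 0`.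
Of `t - s` and `s - t` one is nonnegative, so one coefficient of the combination of `u` and `v`
is at least `½`, and linear independence forbids the combination from vanishing.
-/

/-- The smooth sinusoidal step function. -/
noncomputable def smoothStep (ε : ℝ) (s : ℝ) : ℝ :=
  if s ≤ -ε then 0
  else if s ≤ ε then (1 / 2) * Real.sin (Real.pi * s / (2 * ε)) + 1 / 2
  else 1

open Real Set

theorem Monotone.apply_zero_le_add_mul_deriv {f : ℝ → ℝ} (hf : Monotone f) {s : ℝ}
    (hs : 0 ≤ s) : f 0 ≤ f s + s * deriv f s := by
  have : 0 ≤ s * deriv f s := mul_nonneg hs hf.deriv_nonneg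
  linarith [hf hs]

section

variable {ε : ℝ}

theorem smoothStep_eq_sin_projIcc (hε : 0 < ε) (s : ℝ) :
    smoothStep ε s = 1 / 2 * sin (π * projIcc (-ε) ε (by linarith) s / (2 * ε)) + 1 / 2 := by
  have hε' : ε ≠ 0 := hε.ne'
  rw [coe_projIcc, smoothStep]
  split_ifs with h₁ h₂
  · rw [max_eq_left (min_le_of_right_le h₁), mul_neg, neg_div, mul_div_mul_right _ _ hε',
      sin_neg, sin_pi_div_two]
    norm_num
  · rw [min_eq_right h₂, max_eq_right (not_le.mp h₁).le]
  · rw [min_eq_left (not_le.mp h₂).le, max_eq_right (by linarith),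
      mul_div_mul_right _ _ hε', sin_pi_div_two]
    norm_num

theorem smoothStep_monotone (hε : 0 < ε) : Monotone (smoothStep ε) := by
  have hangle : ∀ c ∈ Icc (-ε) ε, π * c / (2 * ε) ∈ Icc (-(π / 2)) (π / 2) := by
    rintro c ⟨hlo, hhi⟩
    constructor
    · rw [le_div_iff₀ (by positivity)]; nlinarith [pi_pos]
    · rw [div_le_iff₀ (by positivity)]; nlinarith [pi_pos]
  intro x y hxy
  simp only [smoothStep_eq_sin_projIcc hε]
  gcongr 1 / 2 * ?_ + _
  refine strictMonoOn_sin.monotoneOn (hangle _ (Subtype.prop _)) (hangle _ (Subtype.prop _)) ?_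
  gcongr
  exact monotone_projIcc _ hxy

theorem smoothStep_zero (hε : 0 < ε) : smoothStep ε 0 = 1 / 2 := by
  simp [smoothStep, hε.le, hε]

theorem half_le_smoothStep_add_mul_deriv (hε : 0 < ε) {s : ℝ} (hs : 0 ≤ s) :
    1 / 2 ≤ smoothStep ε s + s * deriv (smoothStep ε) s :=
  smoothStep_zero hε ▸ (smoothStep_monotone hε).apply_zero_le_add_mul_deriv hs

end

theorem smoothStep_q_nonneg_and_jacobian_column_ne_zero {m : ℕ} (ε : ℝ) (hε : 0 < ε) :
    (∀ s : ℝ, 0 ≤ s → 0 ≤ smoothStep ε s + s * deriv (smoothStep ε) s) ∧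
    (smoothStep ε 0 + 0 * deriv (smoothStep ε) 0 = 1 / 2) ∧
    (∀ u v : Fin m → ℝ, LinearIndependent ℝ ![u, v] → ∀ s t : ℝ,
      (smoothStep ε (t - s) + (t - s) * deriv (smoothStep ε) (t - s)) • u +
        (smoothStep ε (s - t) + (s - t) * deriv (smoothStep ε) (s - t)) • v ≠ 0) := by
  refine ⟨fun s hs => by linarith [half_le_smoothStep_add_mul_deriv hε hs], by
    simp [smoothStep_zero hε], ?_⟩
  intro u v hli s t hsum
  obtain ⟨hts, hst⟩ := LinearIndependent.pair_iff.mp hli _ _ hsum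
  rcases le_total s t with h | h
  · linarith [hts ▸ half_le_smoothStep_add_mul_deriv hε (sub_nonneg.mpr h)]
  · linarith [hst ▸ half_le_smoothStep_add_mul_deriv hε (sub_nonneg.mpr h)]
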